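/- arXiv:2103.12655 — 2 statements merged into one kernel-verified Lean document; each statement's English description precedes it below -/
import Mathlib

section
/- Let q ≥ 5 be a prime power. The real chords of the twisted cubic C form a single orbit under G_q: every element of G_q maps each real chord to a real chord, and for any two real chords ℓ1, ℓ2 there exists φ ∈ G_q with φ·ℓ1 = ℓ2. -/
open Matrix

noncomputable section

/-- A point of `PG(3,q)`: a 1-dimensional subspace of `F^4`. -/
def IsPoint (F : Type) [Field F] (W : Submodule F (Fin 4 → F)) : Prop :=
  Module.finrank F W = 1

/-- A line of `PG(3,q)`: a 2-dimensional subspace of `F^4`. -/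
def IsLine (F : Type) [Field F] (W : Submodule F (Fin 4 → F)) : Prop :=
  Module.finrank F W = 2

/-- The twisted cubic `C = {P(t) : t ∈ F} ∪ {P(∞)}` as a set of points of `PG(3,q)`. -/
def twistedCubic (F : Type) [Field F] : Set (Submodule F (Fin 4 → F)) :=
  {W | (∃ t : F, W = Submodule.span F {![t ^ 3, t ^ 2, t, 1]}) ∨
       W = Submodule.span F {![1, 0, 0, 0]}}

/-- The action of an invertible matrix on subspaces of `F^4` (row-vector convention
`x ↦ x·M`). -/
def act (F : Type) [Field F] (M : GL (Fin 4) F) :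
    Submodule F (Fin 4 → F) → Submodule F (Fin 4 → F) :=
  fun W => W.map (Matrix.vecMulLinear (M : Matrix (Fin 4) (Fin 4) F))

/-- The group `G_q` of projectivities stabilizing the twisted cubic: the maps on
subspaces induced by invertible matrices mapping the cubic onto itself.  (Two
matrices induce the same projectivity iff they induce the same map on subspaces,
so elements of `G_q` are faithfully represented by such maps.) -/
def Gq (F : Type) [Field F] :
    Set (Submodule F (Fin 4 → F) → Submodule F (Fin 4 → F)) :=
  {f | (∃ M : GL (Fin 4) F, f = act F M) ∧ f '' twistedCubic F = twistedCubic F}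

/-- A real chord of `C`: a line containing exactly two points of `C`. -/
def IsRealChord (F : Type) [Field F] (ℓ : Submodule F (Fin 4 → F)) : Prop :=
  IsLine F ℓ ∧ {P | P ∈ twistedCubic F ∧ P ≤ ℓ}.ncard = 2

----------------------------------------------------------------
-- Auxiliary material
----------------------------------------------------------------

namespace TCAux

variable {F : Type} [Field F]

lemma act_act (M N : GL (Fin 4) F) (W : Submodule F (Fin 4 → F)) :
    act F N (act F M W) = act F (M * N) W := by
  unfold act
  rw [← Submodule.map_comp]
  congr 1
  refine LinearMap.ext fun v => ?_
  simp [Matrix.vecMul_vecMul]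

lemma act_one (W : Submodule F (Fin 4 → F)) : act F 1 W = W := by
  unfold act
  rw [show ((1 : GL (Fin 4) F) : Matrix (Fin 4) (Fin 4) F).vecMulLinear
      = LinearMap.id from LinearMap.ext fun v => by simp]
  exact Submodule.map_id W

lemma act_inv_act (M : GL (Fin 4) F) (W : Submodule F (Fin 4 → F)) :
    act F M⁻¹ (act F M W) = W := by
  rw [act_act, mul_inv_cancel, act_one]

lemma act_act_inv (M : GL (Fin 4) F) (W : Submodule F (Fin 4 → F)) :
    act F M (act F M⁻¹ W) = W := by
  rw [act_act, inv_mul_cancel, act_one]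

lemma mem_Gq_of_maps (M : GL (Fin 4) F)
    (h1 : ∀ W ∈ twistedCubic F, act F M W ∈ twistedCubic F)
    (h2 : ∀ W ∈ twistedCubic F, act F M⁻¹ W ∈ twistedCubic F) :
    act F M ∈ Gq F := by
  refine ⟨⟨M, rfl⟩, Set.Subset.antisymm ?_ ?_⟩
  · rintro _ ⟨W, hW, rfl⟩; exact h1 W hW
  · intro W hW
    exact ⟨act F M⁻¹ W, h2 W hW, act_act_inv M W⟩

lemma Gq_comp {f g : Submodule F (Fin 4 → F) → Submodule F (Fin 4 → F)}
    (hf : f ∈ Gq F) (hg : g ∈ Gq F) : (g ∘ f) ∈ Gq F := by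
  obtain ⟨⟨Mf, rfl⟩, hCf⟩ := hf
  obtain ⟨⟨Mg, rfl⟩, hCg⟩ := hg
  refine ⟨⟨Mf * Mg, ?_⟩, ?_⟩
  · funext W; simp [Function.comp, act_act]
  · rw [Set.image_comp, hCf, hCg]

lemma Gq_inv {f : Submodule F (Fin 4 → F) → Submodule F (Fin 4 → F)}
    (hf : f ∈ Gq F) : ∃ g ∈ Gq F, ∀ W, g (f W) = W := by
  obtain ⟨⟨M, rfl⟩, hC⟩ := hf
  refine ⟨act F M⁻¹, ⟨⟨M⁻¹, rfl⟩, ?_⟩, fun W => act_inv_act M W⟩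
  have : act F M⁻¹ '' (act F M '' twistedCubic F) = twistedCubic F := by
    rw [← Set.image_comp]
    have : (act F M⁻¹ ∘ act F M) = id := funext fun W => act_inv_act M W
    rw [this, Set.image_id]
  conv_lhs => rw [← hC]
  exact this

lemma rel_trans {ℓ1 ℓ2 ℓ3 : Submodule F (Fin 4 → F)}
    (h1 : ∃ f ∈ Gq F, f ℓ1 = ℓ2) (h2 : ∃ g ∈ Gq F, g ℓ2 = ℓ3) :
    ∃ h ∈ Gq F, h ℓ1 = ℓ3 := by
  obtain ⟨f, hf, rfl⟩ := h1
  obtain ⟨g, hg, rfl⟩ := h2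
  exact ⟨g ∘ f, Gq_comp hf hg, rfl⟩

lemma act_span_pair (M : GL (Fin 4) F) (u v : Fin 4 → F) :
    act F M (Submodule.span F {u, v})
      = Submodule.span F {u ᵥ* (M : Matrix (Fin 4) (Fin 4) F),
          v ᵥ* (M : Matrix (Fin 4) (Fin 4) F)} := by
  unfold act
  rw [Submodule.map_span, Set.image_pair]
  simp

lemma act_span_single (M : GL (Fin 4) F) (u : Fin 4 → F) :
    act F M (Submodule.span F {u})
      = Submodule.span F {u ᵥ* (M : Matrix (Fin 4) (Fin 4) F)} := by
  unfold act
  rw [Submodule.map_span, Set.image_singleton]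
  simp

lemma span_pair_eq_sup (u v : Fin 4 → F) :
    Submodule.span F {u, v} = Submodule.span F {u} ⊔ Submodule.span F {v} := by
  rw [← Submodule.span_union, Set.singleton_union]

lemma span_pair_smul_right (u v : Fin 4 → F) (c : F) (hc : c ≠ 0) :
    Submodule.span F {u, c • v} = Submodule.span F {u, v} := by
  rw [span_pair_eq_sup, span_pair_eq_sup,
    Submodule.span_singleton_smul_eq (IsUnit.mk0 c hc)]

/-- the translation matrix for `t ↦ t + c` -/
def Tmat (c : F) : Matrix (Fin 4) (Fin 4) F :=
  !![1,0,0,0; 3*c,1,0,0; 3*c^2,2*c,1,0; c^3,c^2,c,1]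

lemma Tmat_mul (c d : F) : Tmat c * Tmat d = Tmat (c + d) := by
  unfold Tmat
  ext i j
  fin_cases i <;> fin_cases j <;>
    simp [Matrix.mul_apply, Fin.sum_univ_four] <;> ring

lemma Tmat_zero : (Tmat (0:F)) = 1 := by
  unfold Tmat
  ext i j
  fin_cases i <;> fin_cases j <;>
    simp [Matrix.one_apply, Matrix.vecHead, Matrix.vecTail]

/-- translation as an element of `GL` -/
def Tgl (c : F) : GL (Fin 4) F :=
  ⟨Tmat c, Tmat (-c),
    by rw [Tmat_mul, add_neg_cancel, Tmat_zero],
    by rw [Tmat_mul, neg_add_cancel, Tmat_zero]⟩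

lemma Tgl_inv (c : F) : (Tgl c)⁻¹ = Tgl (-c) := by
  apply Units.ext
  rfl

lemma vecMul_T (c t : F) :
    (![t^3, t^2, t, 1]) ᵥ* Tmat c = ![(t+c)^3, (t+c)^2, t+c, 1] := by
  unfold Tmat
  funext i
  fin_cases i <;>
    simp [Matrix.vecMul, dotProduct, Fin.sum_univ_four, Matrix.vecHead, Matrix.vecTail] <;> ring

lemma vecMul_T_inf (c : F) :
    (![(1:F), 0, 0, 0]) ᵥ* Tmat c = ![1, 0, 0, 0] := by
  unfold Tmat
  funext i
  fin_cases i <;>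
    simp [Matrix.vecMul, dotProduct, Fin.sum_univ_four, Matrix.vecHead, Matrix.vecTail]

/-- the inversion matrix for `t ↦ 1/t` -/
def Jmat : Matrix (Fin 4) (Fin 4) F :=
  !![0,0,0,1; 0,0,1,0; 0,1,0,0; 1,0,0,0]

lemma Jmat_mul : (Jmat : Matrix (Fin 4) (Fin 4) F) * Jmat = 1 := by
  unfold Jmat
  ext i j
  fin_cases i <;> fin_cases j <;> simp [Matrix.mul_apply, Fin.sum_univ_four, Matrix.one_apply, Matrix.vecHead, Matrix.vecTail]

def Jgl : GL (Fin 4) F := ⟨Jmat, Jmat, Jmat_mul, Jmat_mul⟩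

lemma Jgl_inv : (Jgl : GL (Fin 4) F)⁻¹ = Jgl := by
  apply Units.ext
  rfl

lemma vecMul_J (t : F) :
    (![t^3, t^2, t, 1]) ᵥ* Jmat = ![1, t, t^2, t^3] := by
  unfold Jmat
  funext i
  fin_cases i <;>
    simp [Matrix.vecMul, dotProduct, Fin.sum_univ_four, Matrix.vecHead, Matrix.vecTail]

lemma vecMul_J_inf :
    (![(1:F), 0, 0, 0]) ᵥ* Jmat = ![0, 0, 0, 1] := by
  unfold Jmat
  funext i
  fin_cases i <;>
    simp [Matrix.vecMul, dotProduct, Fin.sum_univ_four, Matrix.vecHead, Matrix.vecTail]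

lemma J_flip (t : F) (ht : t ≠ 0) :
    (![(1:F), t, t^2, t^3]) = t^3 • ![(t⁻¹)^3, (t⁻¹)^2, t⁻¹, 1] := by
  funext i
  fin_cases i <;> simp [Pi.smul_apply] <;> field_simp <;> ring_nf

lemma vec_zero_pt : (![(0:F)^3, 0^2, 0, 1]) = ![0,0,0,1] := by
  funext i; fin_cases i <;> norm_num

/-- translations stabilize the cubic -/
lemma T_maps (c : F) : ∀ W ∈ twistedCubic F, act F (Tgl c) W ∈ twistedCubic F := by
  rintro W (⟨t, rfl⟩ | rfl)
  · left
    exact ⟨t + c, by rw [act_span_single]; rw [show ((Tgl c : GL (Fin 4) F) : Matrix (Fin 4) (Fin 4) F) = Tmat c from rfl, vecMul_T]⟩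
  · right
    rw [act_span_single, show ((Tgl c : GL (Fin 4) F) : Matrix (Fin 4) (Fin 4) F) = Tmat c from rfl, vecMul_T_inf]

lemma T_mem (c : F) : act F (Tgl c) ∈ Gq F := by
  refine mem_Gq_of_maps _ (T_maps c) ?_
  rw [Tgl_inv]
  exact T_maps (-c)

/-- inversion stabilizes the cubic -/
lemma J_maps : ∀ W ∈ twistedCubic F, act F Jgl W ∈ twistedCubic F := by
  rintro W (⟨t, rfl⟩ | rfl)
  · rw [act_span_single, show ((Jgl : GL (Fin 4) F) : Matrix (Fin 4) (Fin 4) F) = Jmat from rfl, vecMul_J]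
    by_cases ht : t = 0
    · right; subst ht
      norm_num
    · left
      refine ⟨t⁻¹, ?_⟩
      rw [J_flip t ht, Submodule.span_singleton_smul_eq (IsUnit.mk0 _ (pow_ne_zero 3 ht))]
  · left
    refine ⟨0, ?_⟩
    rw [act_span_single, show ((Jgl : GL (Fin 4) F) : Matrix (Fin 4) (Fin 4) F) = Jmat from rfl, vecMul_J_inf, vec_zero_pt]

lemma J_mem : act F (Jgl : GL (Fin 4) F) ∈ Gq F := by
  refine mem_Gq_of_maps _ J_maps ?_
  rw [Jgl_inv]
  exact J_maps

lemma vecMul_J_zero :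
    (![(0:F), 0, 0, 1]) ᵥ* Jmat = ![1, 0, 0, 0] := by
  unfold Jmat
  funext i
  fin_cases i <;>
    simp [Matrix.vecMul, dotProduct, Fin.sum_univ_four, Matrix.vecHead, Matrix.vecTail]

/-- The linear equivalence of `F^4` given by right multiplication by `M`. -/
def glEquiv (M : GL (Fin 4) F) : (Fin 4 → F) ≃ₗ[F] (Fin 4 → F) :=
  LinearEquiv.ofLinear
    ((M : Matrix (Fin 4) (Fin 4) F).vecMulLinear)
    (((M⁻¹ : GL (Fin 4) F) : Matrix (Fin 4) (Fin 4) F).vecMulLinear)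
    (LinearMap.ext fun v => by
      simp only [LinearMap.coe_comp, Function.comp_apply, Matrix.vecMulLinear_apply,
        Matrix.vecMul_vecMul, ← Units.val_mul, inv_mul_cancel, mul_inv_cancel,
        Units.val_one, Matrix.vecMul_one, LinearMap.id_coe, id_eq])
    (LinearMap.ext fun v => by
      simp only [LinearMap.coe_comp, Function.comp_apply, Matrix.vecMulLinear_apply,
        Matrix.vecMul_vecMul, ← Units.val_mul, inv_mul_cancel, mul_inv_cancel,
        Units.val_one, Matrix.vecMul_one, LinearMap.id_coe, id_eq])

lemma finrank_act (M : GL (Fin 4) F) (W : Submodule F (Fin 4 → F)) :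
    Module.finrank F (act F M W) = Module.finrank F W := by
  have h : act F M W = W.map ((glEquiv M : (Fin 4 → F) →ₗ[F] (Fin 4 → F))) := rfl
  rw [h]
  exact LinearEquiv.finrank_map_eq (glEquiv M) W

lemma act_le_iff (M : GL (Fin 4) F) (W V : Submodule F (Fin 4 → F)) :
    act F M W ≤ act F M V ↔ W ≤ V :=
  Submodule.map_le_map_iff_of_injective (glEquiv M).injective W V

lemma act_injective (M : GL (Fin 4) F) : Function.Injective (act F M) := by
  intro W V h
  have := congrArg (act F M⁻¹) h
  rwa [act_inv_act, act_inv_act] at this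

lemma part1 : ∀ f ∈ Gq F, ∀ ℓ, IsRealChord F ℓ → IsRealChord F (f ℓ) := by
  rintro f ⟨⟨M, rfl⟩, hC⟩ ℓ ⟨hline, hcount⟩
  constructor
  · show Module.finrank F _ = 2
    rw [finrank_act]
    exact hline
  · have hset : {P | P ∈ twistedCubic F ∧ P ≤ act F M ℓ}
        = act F M '' {P | P ∈ twistedCubic F ∧ P ≤ ℓ} := by
      ext Q
      constructor
      · rintro ⟨hQC, hQle⟩
        rw [← hC] at hQC
        obtain ⟨P, hP, rfl⟩ := hQC
        exact ⟨P, ⟨hP, (act_le_iff M P ℓ).mp hQle⟩, rfl⟩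
      · rintro ⟨P, ⟨hPC, hPle⟩, rfl⟩
        refine ⟨?_, (act_le_iff M P ℓ).mpr hPle⟩
        rw [← hC]
        exact ⟨P, hPC, rfl⟩
    rw [hset, Set.ncard_image_of_injective _ (act_injective M)]
    exact hcount

lemma pt_ne_zero (t : F) : (![t^3, t^2, t, 1]) ≠ 0 := by
  intro h
  have := congrFun h 3
  simp at this

lemma inf_ne_zero : (![(1:F), 0, 0, 0]) ≠ 0 := by
  intro h
  have := congrFun h 0
  simp at this

lemma finrank_point {W : Submodule F (Fin 4 → F)} (hW : W ∈ twistedCubic F) :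
    Module.finrank F W = 1 := by
  rcases hW with ⟨t, rfl⟩ | rfl
  · exact finrank_span_singleton (pt_ne_zero t)
  · exact finrank_span_singleton inf_ne_zero

lemma line_eq_sup {ℓ A B : Submodule F (Fin 4 → F)} (hline : IsLine F ℓ)
    (hA : A ∈ twistedCubic F) (hB : B ∈ twistedCubic F)
    (hAl : A ≤ ℓ) (hBl : B ≤ ℓ) (hAB : A ≠ B) : ℓ = A ⊔ B := by
  have hline' : Module.finrank F ℓ = 2 := hline
  have hsup : A ⊔ B ≤ ℓ := sup_le hAl hBl
  rcases eq_or_lt_of_le hsup with h | h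
  · exact h.symm
  · exfalso
    have hlt := Submodule.finrank_lt_finrank_of_lt h
    rw [hline'] at hlt
    have h1 := finrank_point hA
    have h2 := finrank_point hB
    have e1 : A = A ⊔ B := Submodule.eq_of_le_of_finrank_le le_sup_left (by omega)
    have e2 : B = A ⊔ B := Submodule.eq_of_le_of_finrank_le le_sup_right (by omega)
    exact hAB (e1.trans e2.symm)

/-- the standard chord, through `P(∞)` and `P(0)` -/
def chord0 (F : Type) [Field F] : Submodule F (Fin 4 → F) :=
  Submodule.span F {![1,0,0,0], ![0,0,0,1]}

lemma coe_Tgl (c : F) :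
    ((Tgl c : GL (Fin 4) F) : Matrix (Fin 4) (Fin 4) F) = Tmat c := rfl

lemma coe_Jgl : ((Jgl : GL (Fin 4) F) : Matrix (Fin 4) (Fin 4) F) = Jmat := rfl

lemma red_inf (a : F) :
    ∃ f ∈ Gq F, f (Submodule.span F {![a^3, a^2, a, 1], ![1,0,0,0]}) = chord0 F := by
  refine ⟨act F (Tgl (-a)), T_mem (-a), ?_⟩
  rw [act_span_pair, coe_Tgl, vecMul_T, vecMul_T_inf,
    show a + -a = (0:F) by ring, vec_zero_pt]
  unfold chord0
  rw [Set.pair_comm]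

lemma red_fin (a b : F) (hab : a ≠ b) :
    ∃ f ∈ Gq F, f (Submodule.span F {![a^3, a^2, a, 1], ![b^3, b^2, b, 1]}) = chord0 F := by
  set s : F := b + -a with hs
  have hs0 : s ≠ 0 := by
    rw [hs]
    intro h
    exact hab (by linear_combination -h)
  have step1 : ∃ f ∈ Gq F,
      f (Submodule.span F {![a^3, a^2, a, 1], ![b^3, b^2, b, 1]})
        = Submodule.span F {![0,0,0,1], ![s^3, s^2, s, 1]} := by
    refine ⟨act F (Tgl (-a)), T_mem (-a), ?_⟩
    rw [act_span_pair, coe_Tgl, vecMul_T, vecMul_T,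
      show a + -a = (0:F) by ring, vec_zero_pt]
  have step2 : ∃ f ∈ Gq F,
      f (Submodule.span F {![0,0,0,1], ![s^3, s^2, s, 1]})
        = Submodule.span F {![(s⁻¹)^3, (s⁻¹)^2, s⁻¹, 1], ![1,0,0,0]} := by
    refine ⟨act F Jgl, J_mem, ?_⟩
    rw [act_span_pair, coe_Jgl, vecMul_J, vecMul_J_zero, J_flip s hs0,
      span_pair_smul_right _ _ _ (pow_ne_zero 3 hs0), Set.pair_comm]
  exact rel_trans (rel_trans step1 step2) (red_inf s⁻¹)

lemma key : ∀ ℓ, IsRealChord F ℓ → ∃ f ∈ Gq F, f ℓ = chord0 F := by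
  rintro ℓ ⟨hline, hcount⟩
  obtain ⟨A, B, hAB, hS⟩ := Set.ncard_eq_two.mp hcount
  have hA : A ∈ twistedCubic F ∧ A ≤ ℓ := by
    have : A ∈ {P | P ∈ twistedCubic F ∧ P ≤ ℓ} := by
      rw [hS]; exact Set.mem_insert _ _
    exact this
  have hB : B ∈ twistedCubic F ∧ B ≤ ℓ := by
    have : B ∈ {P | P ∈ twistedCubic F ∧ P ≤ ℓ} := by
      rw [hS]; exact Set.mem_insert_of_mem _ rfl
    exact this
  have hl : ℓ = A ⊔ B := line_eq_sup hline hA.1 hB.1 hA.2 hB.2 hAB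
  obtain ⟨hA1, -⟩ := hA
  obtain ⟨hB1, -⟩ := hB
  rcases hA1 with ⟨a, rfl⟩ | rfl <;> rcases hB1 with ⟨b, rfl⟩ | rfl
  · have hab : a ≠ b := fun h => hAB (by rw [h])
    rw [hl, ← span_pair_eq_sup]
    exact red_fin a b hab
  · rw [hl, ← span_pair_eq_sup]
    exact red_inf a
  · rw [hl, ← span_pair_eq_sup, Set.pair_comm]
    exact red_inf b
  · exact absurd rfl hAB

end TCAux

open TCAux in
/-- The real chords of the twisted cubic form a single orbit under `G_q`. -/
theorem stmt_0 (q : ℕ) (hq : 5 ≤ q) (F : Type) [Field F] [Fintype F]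
    (hcard : Fintype.card F = q) :
    (∀ f ∈ Gq F, ∀ ℓ, IsRealChord F ℓ → IsRealChord F (f ℓ)) ∧
    (∀ ℓ1 ℓ2, IsRealChord F ℓ1 → IsRealChord F ℓ2 →
      ∃ f ∈ Gq F, f ℓ1 = ℓ2) := by
  constructor
  · exact part1
  · intro ℓ1 ℓ2 h1 h2
    obtain ⟨f1, hf1, he1⟩ := key ℓ1 h1
    obtain ⟨f2, hf2, he2⟩ := key ℓ2 h2
    obtain ⟨g2, hg2, hg2i⟩ := Gq_inv hf2
    refine ⟨g2 ∘ f1, Gq_comp hf1 hg2, ?_⟩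
    show g2 (f1 ℓ1) = ℓ2
    rw [he1, ← he2, hg2i]
end
end

section
/- Let q ≥ 5 be a prime power. For every point P of the twisted cubic C, the stabilizer {φ ∈ G_q : φ·P = P} of P in G_q has exactly q(q−1) elements. -/
open Matrix

noncomputable section

/-!
If a projectivity `x ↦ xM` of `G_q` fixes `P(∞)`, then row `0` of `M` is a multiple of `(1,0,0,0)`,
so for `j ≥ 1` the `j`-th coordinate of `P(t)M` is a polynomial of degree `≤ 2` in `t`. Writing
`P(t)M = μ(t) P(σ t)`, these polynomials are `μσ²`, `μσ` and `μ`, and `(μσ)² = μσ² · μ` holds as a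
polynomial identity because both sides have degree `≤ 4 < q`. Since `μ` has no roots in `F`, a
non-constant `μ` would be an irreducible quadratic dividing `μσ`, making `σ` constant. Hence `μ` is
constant and `μσ` is linear, so `M` is a scalar multiple of the matrix inducing `t ↦ at + b`; these
`q(q - 1)` projectivities are pairwise distinct. Translations and `t ↦ 1/t` make `G_q` transitive on
`C`, so all point stabilizers are conjugate.
-/

open Polynomial Set

namespace TwistedCubic

variable {F : Type} [Field F]

def cubicVec (t : F) : Fin 4 → F := ![t ^ 3, t ^ 2, t, 1]

def infVec : Fin 4 → F := ![1, 0, 0, 0]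

lemma infVec_eq_single : (infVec : Fin 4 → F) = Pi.single 0 1 := by
  funext j
  fin_cases j <;> rfl

def cubicPoint (t : F) : Submodule F (Fin 4 → F) := Submodule.span F {cubicVec t}

def infPoint : Submodule F (Fin 4 → F) := Submodule.span F {infVec}

lemma mem_twistedCubic {W : Submodule F (Fin 4 → F)} :
    W ∈ twistedCubic F ↔ (∃ t, W = cubicPoint t) ∨ W = infPoint := Iff.rfl

lemma cubicPoint_mem (t : F) : cubicPoint t ∈ twistedCubic F := Or.inl ⟨t, rfl⟩

lemma infPoint_mem : infPoint ∈ twistedCubic F := Or.inr rfl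

lemma cubicPoint_injective : Function.Injective (cubicPoint (F := F)) := by
  intro s t h
  obtain ⟨z, hz⟩ := Submodule.span_singleton_eq_span_singleton.mp h
  have h3 := congrFun hz 3
  simp [cubicVec, Units.smul_def] at h3
  simpa [cubicVec, h3] using congrFun hz 2

lemma cubicPoint_ne_infPoint (t : F) : cubicPoint t ≠ infPoint := by
  intro h
  obtain ⟨z, hz⟩ := Submodule.span_singleton_eq_span_singleton.mp h
  have h3 := congrFun hz 3
  simp [cubicVec, infVec, Units.smul_def] at h3

lemma act_span_singleton (M : GL (Fin 4) F) (x : Fin 4 → F) :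
    act F M (Submodule.span F {x}) = Submodule.span F {x ᵥ* (M : Matrix (Fin 4) (Fin 4) F)} := by
  simp [act, Submodule.map_span, Set.image_singleton]

lemma act_mul (A B : GL (Fin 4) F) (W : Submodule F (Fin 4 → F)) :
    act F (A * B) W = act F B (act F A W) := by
  simp only [act, ← Submodule.map_comp]
  congr 1
  refine LinearMap.ext fun x => ?_
  simp [Matrix.vecMul_vecMul]

lemma act_one (W : Submodule F (Fin 4 → F)) : act F 1 W = W := by
  simp only [act, Units.val_one]
  convert Submodule.map_id W
  exact LinearMap.ext fun x => Matrix.vecMul_one x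

lemma act_act_inv (M : GL (Fin 4) F) (W : Submodule F (Fin 4 → F)) :
    act F M (act F M⁻¹ W) = W := by
  rw [← act_mul, inv_mul_cancel, act_one]

lemma act_inv_act (M : GL (Fin 4) F) (W : Submodule F (Fin 4 → F)) :
    act F M⁻¹ (act F M W) = W := by
  simpa using act_act_inv M⁻¹ W

lemma act_injective (M : GL (Fin 4) F) : Function.Injective (act F M) :=
  Function.LeftInverse.injective (act_inv_act M)

lemma act_eq_act_of_val_eq_smul {M N : GL (Fin 4) F} {c : F} (hc : c ≠ 0)
    (h : (M : Matrix (Fin 4) (Fin 4) F) = c • (N : Matrix (Fin 4) (Fin 4) F)) :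
    act F M = act F N := by
  funext W
  have : Matrix.vecMulLinear (M : Matrix (Fin 4) (Fin 4) F) = c • Matrix.vecMulLinear N := by
    ext x : 1
    simp [h]
  simp only [act, this, Submodule.map_smul _ _ _ hc]

lemma comp_mem_Gq {f g : Submodule F (Fin 4 → F) → Submodule F (Fin 4 → F)}
    (hf : f ∈ Gq F) (hg : g ∈ Gq F) : f ∘ g ∈ Gq F := by
  obtain ⟨⟨A, rfl⟩, hfC⟩ := hf
  obtain ⟨⟨B, rfl⟩, hgC⟩ := hg
  refine ⟨⟨B * A, funext fun W => (act_mul B A W).symm⟩, ?_⟩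
  rw [image_comp, hgC, hfC]

lemma act_inv_mem_Gq {M : GL (Fin 4) F} (hM : act F M ∈ Gq F) : act F M⁻¹ ∈ Gq F := by
  refine ⟨⟨M⁻¹, rfl⟩, ?_⟩
  conv_lhs => rw [← hM.2, ← image_comp]
  simp only [Function.comp_def, act_inv_act, image_id']

def GqStabilizer (F : Type) [Field F] (P : Submodule F (Fin 4 → F)) :
    Set (Submodule F (Fin 4 → F) → Submodule F (Fin 4 → F)) :=
  {f | f ∈ Gq F ∧ f P = P}

lemma conj_mem_GqStabilizer {M : GL (Fin 4) F} (hM : act F M ∈ Gq F)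
    {P : Submodule F (Fin 4 → F)} {f : Submodule F (Fin 4 → F) → Submodule F (Fin 4 → F)}
    (hf : f ∈ GqStabilizer F P) :
    act F M ∘ f ∘ act F M⁻¹ ∈ GqStabilizer F (act F M P) :=
  ⟨comp_mem_Gq hM (comp_mem_Gq hf.1 (act_inv_mem_Gq hM)), by simp [act_inv_act, hf.2]⟩

lemma ncard_GqStabilizer_act {M : GL (Fin 4) F} (hM : act F M ∈ Gq F)
    (P : Submodule F (Fin 4 → F)) :
    (GqStabilizer F (act F M P)).ncard = (GqStabilizer F P).ncard := by
  let conj : (Submodule F (Fin 4 → F) → Submodule F (Fin 4 → F)) ≃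
      (Submodule F (Fin 4 → F) → Submodule F (Fin 4 → F)) :=
    { toFun := fun f => act F M ∘ f ∘ act F M⁻¹
      invFun := fun f => act F M⁻¹ ∘ f ∘ act F M⁻¹⁻¹
      left_inv := fun f => by funext W; simp [act_inv_act]
      right_inv := fun f => by funext W; simp [act_act_inv] }
  have himage : conj '' GqStabilizer F P = GqStabilizer F (act F M P) := by
    refine Subset.antisymm (image_subset_iff.mpr fun f hf => conj_mem_GqStabilizer hM hf) ?_
    intro f hf
    refine ⟨conj.symm f, ?_, conj.apply_symm_apply f⟩
    have h := conj_mem_GqStabilizer (act_inv_mem_Gq hM) hf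
    rwa [act_inv_act] at h

  rw [← himage, ncard_image_of_injective _ conj.injective]

def affineMatrix (a b : F) : Matrix (Fin 4) (Fin 4) F :=
  !![a ^ 3, 0, 0, 0;
     3 * a ^ 2 * b, a ^ 2, 0, 0;
     3 * a * b ^ 2, 2 * a * b, a, 0;
     b ^ 3, b ^ 2, b, 1]

lemma cubicVec_vecMul_affineMatrix (t a b : F) :
    cubicVec t ᵥ* affineMatrix a b = cubicVec (a * t + b) := by
  funext j
  fin_cases j <;> simp [cubicVec, affineMatrix, Matrix.vecMul, dotProduct, Fin.sum_univ_four] <;>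
    ring

lemma infVec_vecMul_affineMatrix (a b : F) : infVec ᵥ* affineMatrix a b = a ^ 3 • infVec := by
  funext j
  fin_cases j <;> simp [infVec, affineMatrix, Matrix.vecMul, dotProduct, Fin.sum_univ_four]

lemma affineMatrix_mul (a b c d : F) :
    affineMatrix a b * affineMatrix c d = affineMatrix (c * a) (c * b + d) := by
  ext i j
  fin_cases i <;> fin_cases j <;> simp [affineMatrix, Matrix.mul_apply, Fin.sum_univ_four] <;> ring

lemma affineMatrix_one_zero : (affineMatrix 1 0 : Matrix (Fin 4) (Fin 4) F) = 1 := by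
  ext i j
  fin_cases i <;> fin_cases j <;> simp [affineMatrix]

def affineGL (a : Fˣ) (b : F) : GL (Fin 4) F where
  val := affineMatrix a b
  inv := affineMatrix ↑a⁻¹ (-(↑a⁻¹ * b))
  val_inv := by simp [affineMatrix_mul, affineMatrix_one_zero]
  inv_val := by simp [affineMatrix_mul, affineMatrix_one_zero]

lemma coe_affineGL (a : Fˣ) (b : F) :
    (affineGL a b : Matrix (Fin 4) (Fin 4) F) = affineMatrix (a : F) b := rfl

lemma act_affineGL_cubicPoint (a : Fˣ) (b t : F) :
    act F (affineGL a b) (cubicPoint t) = cubicPoint (a * t + b) := by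
  rw [cubicPoint, act_span_singleton, coe_affineGL, cubicVec_vecMul_affineMatrix, cubicPoint]

lemma act_affineGL_infPoint (a : Fˣ) (b : F) : act F (affineGL a b) infPoint = infPoint := by
  rw [infPoint, act_span_singleton, coe_affineGL, infVec_vecMul_affineMatrix]
  exact Submodule.span_singleton_smul_eq (a.isUnit.pow 3) _

lemma affineGL_mem_Gq (a : Fˣ) (b : F) : act F (affineGL a b) ∈ Gq F := by
  refine ⟨⟨_, rfl⟩, Subset.antisymm ?_ fun W hW => ?_⟩
  · rintro _ ⟨W, hW, rfl⟩
    rcases mem_twistedCubic.mp hW with ⟨t, rfl⟩ | rfl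
    · rw [act_affineGL_cubicPoint]; exact cubicPoint_mem _
    · rw [act_affineGL_infPoint]; exact infPoint_mem
  · rcases mem_twistedCubic.mp hW with ⟨s, rfl⟩ | rfl
    · refine ⟨cubicPoint (a⁻¹ * (s - b)), cubicPoint_mem _, ?_⟩
      rw [act_affineGL_cubicPoint, Units.mul_inv_cancel_left, sub_add_cancel]
    · exact ⟨infPoint, infPoint_mem, act_affineGL_infPoint a b⟩

lemma act_affineGL_injective :
    Function.Injective fun p : Fˣ × F => act F (affineGL p.1 p.2) := by
  rintro ⟨a, b⟩ ⟨a', b'⟩ h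
  have h0 := congrFun h (cubicPoint 0)
  have h1 := congrFun h (cubicPoint 1)
  simp only [act_affineGL_cubicPoint, mul_zero, zero_add, mul_one] at h0 h1
  have hb := cubicPoint_injective h0
  have ha := cubicPoint_injective h1
  subst hb
  exact Prod.ext (Units.ext (add_right_cancel ha)) rfl

def reverseMatrix : Matrix (Fin 4) (Fin 4) F :=
  !![0, 0, 0, 1;
     0, 0, 1, 0;
     0, 1, 0, 0;
     1, 0, 0, 0]

lemma reverseMatrix_mul_self : (reverseMatrix : Matrix (Fin 4) (Fin 4) F) * reverseMatrix = 1 := by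
  ext i j
  fin_cases i <;> fin_cases j <;> simp [reverseMatrix, Matrix.mul_apply, Fin.sum_univ_four]

def reverseGL : GL (Fin 4) F := ⟨reverseMatrix, reverseMatrix, reverseMatrix_mul_self,
  reverseMatrix_mul_self⟩

lemma act_reverseGL_act_reverseGL (W : Submodule F (Fin 4 → F)) :
    act F reverseGL (act F reverseGL W) = W := by
  rw [← act_mul, show (reverseGL : GL (Fin 4) F) * reverseGL = 1 from
    Units.ext reverseMatrix_mul_self, act_one]

lemma act_reverseGL_infPoint : act F reverseGL infPoint = cubicPoint 0 := by
  rw [infPoint, act_span_singleton, cubicPoint]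
  congr 2
  funext j
  fin_cases j <;> simp [infVec, cubicVec, reverseGL, reverseMatrix, Matrix.vecMul, dotProduct,
    Fin.sum_univ_four]

lemma act_reverseGL_cubicPoint {t : F} (ht : t ≠ 0) :
    act F reverseGL (cubicPoint t) = cubicPoint t⁻¹ := by
  have h : cubicVec t ᵥ* ((reverseGL : GL (Fin 4) F) : Matrix (Fin 4) (Fin 4) F) =
      t ^ 3 • cubicVec t⁻¹ := by
    funext j
    fin_cases j <;> simp [cubicVec, reverseGL, reverseMatrix, Matrix.vecMul, dotProduct,
      Fin.sum_univ_four] <;> field_simp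
  rw [cubicPoint, act_span_singleton, h, cubicPoint]
  exact Submodule.span_singleton_smul_eq (ht.isUnit.pow 3) _

lemma reverseGL_mem_Gq : act F reverseGL ∈ Gq F := by
  have hmaps : ∀ W ∈ twistedCubic F, act F reverseGL W ∈ twistedCubic F := by
    intro W hW
    rcases mem_twistedCubic.mp hW with ⟨t, rfl⟩ | rfl
    · rcases eq_or_ne t 0 with rfl | ht
      · rw [← act_reverseGL_infPoint, act_reverseGL_act_reverseGL]
        exact infPoint_mem
      · rw [act_reverseGL_cubicPoint ht]
        exact cubicPoint_mem _
    · rw [act_reverseGL_infPoint]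
      exact cubicPoint_mem 0
  refine ⟨⟨_, rfl⟩, Subset.antisymm (image_subset_iff.mpr hmaps) fun W hW => ?_⟩
  exact ⟨_, hmaps W hW, act_reverseGL_act_reverseGL W⟩

def colPoly (M : Matrix (Fin 4) (Fin 4) F) (j : Fin 4) : F[X] :=
  C (M 0 j) * X ^ 3 + C (M 1 j) * X ^ 2 + C (M 2 j) * X + C (M 3 j)

lemma eval_colPoly (M : Matrix (Fin 4) (Fin 4) F) (j : Fin 4) (t : F) :
    (colPoly M j).eval t = (cubicVec t ᵥ* M) j := by
  simp [colPoly, cubicVec, Matrix.vecMul, dotProduct, Fin.sum_univ_four]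
  ring

lemma natDegree_colPoly_le_two {M : Matrix (Fin 4) (Fin 4) F} {j : Fin 4} (h : M 0 j = 0) :
    (colPoly M j).natDegree ≤ 2 := by
  rw [colPoly, h, C_0, zero_mul, zero_add]
  exact natDegree_quadratic_le

lemma eq_of_forall_cubicVec_vecMul_eq [Fintype F] (hF : 3 < Fintype.card F)
    {M N : Matrix (Fin 4) (Fin 4) F} (h : ∀ t, cubicVec t ᵥ* M = cubicVec t ᵥ* N) : M = N := by
  ext i j
  have hcol : colPoly M j = colPoly N j :=
    eq_of_natDegree_lt_card_of_eval_eq _ _ Function.injective_id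
      (fun t => by rw [id, eval_colPoly, eval_colPoly, h])
      (max_le natDegree_cubic_le natDegree_cubic_le |>.trans_lt hF)
  fin_cases i
  · simpa [colPoly] using congrArg (coeff · 3) hcol
  · simpa [colPoly] using congrArg (coeff · 2) hcol
  · simpa [colPoly] using congrArg (coeff · 1) hcol
  · simpa [colPoly] using congrArg (coeff · 0) hcol

lemma natDegree_eq_zero_and_le_one_of_sq_eq_mul {p₁ p₂ p₃ : F[X]} (h₁ : p₁.natDegree ≤ 2)
    (h₂ : p₂.natDegree ≤ 2) (h₃ : p₃.natDegree ≤ 2) (hroot : ∀ t, p₃.eval t ≠ 0)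
    (hsq : p₂ ^ 2 = p₁ * p₃) (hprop : ∀ r, p₂ ≠ C r * p₃) :
    p₃.natDegree = 0 ∧ p₂.natDegree ≤ 1 := by
  have hp₃ : p₃ ≠ 0 := fun h => hroot 0 (by simp [h])
  have hconst : p₃.natDegree = 0 := by
    by_contra hpos
    have hdeg : 2 ≤ p₃.natDegree := by
      by_contra hlt
      obtain ⟨t, ht⟩ := exists_root_of_degree_eq_one
        (by rw [degree_eq_natDegree hp₃]; norm_cast; omega)
      exact hroot t ht
    have hirr : Irreducible p₃ := by
      rw [irreducible_iff_roots_eq_zero_of_degree_le_three hdeg (by omega),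
        Multiset.eq_zero_iff_forall_notMem]
      exact fun t ht => hroot t (mem_roots hp₃ |>.mp ht)
    obtain ⟨r, hr⟩ := hirr.prime.dvd_of_dvd_pow (n := 2) ⟨p₁, by rw [hsq, mul_comm]⟩
    have hr0 : r.natDegree = 0 := by
      rcases eq_or_ne r 0 with rfl | hr0
      · exact natDegree_zero
      · rw [hr, natDegree_mul hp₃ hr0] at h₂
        omega
    exact hprop (r.coeff 0) (by rw [hr, mul_comm, ← eq_C_of_natDegree_eq_zero hr0])
  refine ⟨hconst, ?_⟩
  have := natDegree_mul_le (p := p₁) (q := p₃)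
  rw [← hsq, natDegree_pow] at this
  omega

section ImageOfCubic

variable {M : Matrix (Fin 4) (Fin 4) F} {μ : F → Fˣ} {σ : F → F}

lemma eval_colPoly_of_forall_vecMul (hM : ∀ t, cubicVec t ᵥ* M = μ t • cubicVec (σ t))
    (j : Fin 4) (t : F) : (colPoly M j).eval t = μ t * cubicVec (σ t) j := by
  rw [eval_colPoly, hM]
  rfl

lemma colPoly_sq_eq_mul [Fintype F] (hF : 5 ≤ Fintype.card F) (hrow : ∀ j ≠ 0, M 0 j = 0)
    (hM : ∀ t, cubicVec t ᵥ* M = μ t • cubicVec (σ t)) :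
    colPoly M 2 ^ 2 = colPoly M 1 * colPoly M 3 := by
  refine eq_of_natDegree_lt_card_of_eval_eq _ _ Function.injective_id
    (fun t => by simp [eval_colPoly_of_forall_vecMul hM, cubicVec]; ring) ?_
  have := natDegree_pow_le (p := colPoly M 2) (n := 2)
  have := natDegree_mul_le (p := colPoly M 1) (q := colPoly M 3)
  have := natDegree_colPoly_le_two (hrow 1 (by decide))
  have := natDegree_colPoly_le_two (hrow 2 (by decide))
  have := natDegree_colPoly_le_two (hrow 3 (by decide))
  omega

lemma exists_eq_smul_affineMatrix [Fintype F] (hF : 5 ≤ Fintype.card F)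
    (hrow : ∀ j ≠ 0, M 0 j = 0) (hσ : σ 0 ≠ σ 1)
    (hM : ∀ t, cubicVec t ᵥ* M = μ t • cubicVec (σ t)) :
    ∃ (c a : Fˣ) (b : F), M = (c : F) • affineMatrix (a : F) b := by
  have hev := eval_colPoly_of_forall_vecMul hM
  have hnonconst : ∀ r, colPoly M 2 ≠ C r * colPoly M 3 := fun r hr => hσ <| by
    have hσr : ∀ t, σ t = r := fun t => by
      have h := congrArg (eval t) hr
      simp [hev, cubicVec] at h
      exact mul_left_cancel₀ (μ t).ne_zero (h.trans (mul_comm _ _))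
    rw [hσr, hσr]
  obtain ⟨hconst, hlin⟩ := natDegree_eq_zero_and_le_one_of_sq_eq_mul
    (natDegree_colPoly_le_two (hrow 1 (by decide))) (natDegree_colPoly_le_two (hrow 2 (by decide)))
    (natDegree_colPoly_le_two (hrow 3 (by decide))) (fun t => by simp [hev, cubicVec])
    (colPoly_sq_eq_mul hF hrow hM) hnonconst
  have hμ : ∀ t, (μ t : F) = μ 0 := fun t => by
    have h := congrArg (fun p => eval t p - eval 0 p) (eq_C_of_natDegree_eq_zero hconst)
    simpa [hev, cubicVec, sub_eq_zero] using h
  obtain ⟨a, b, hp₂⟩ : ∃ a b, colPoly M 2 = C a * X + C b :=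
    ⟨_, _, eq_X_add_C_of_natDegree_le_one hlin⟩
  have hσ_affine : ∀ t, σ t = (μ 0 : F)⁻¹ * a * t + (μ 0 : F)⁻¹ * b := fun t => by
    have h := congrArg (eval t) hp₂
    simp only [hev, cubicVec, Matrix.cons_val, hμ t, eval_add, eval_mul, eval_C, eval_X] at h
    field_simp
    linear_combination h
  have ha : (μ 0 : F)⁻¹ * a ≠ 0 := fun h => hσ (by rw [hσ_affine, hσ_affine, h]; ring)
  refine ⟨μ 0, Units.mk0 _ ha, (μ 0 : F)⁻¹ * b,
    eq_of_forall_cubicVec_vecMul_eq (by omega) fun t => ?_⟩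
  rw [hM, Matrix.vecMul_smul, cubicVec_vecMul_affineMatrix, Units.val_mk0, ← hσ_affine,
    Units.smul_def, hμ]

end ImageOfCubic

lemma exists_affineGL_of_mem_GqStabilizer_infPoint [Fintype F] (hF : 5 ≤ Fintype.card F)
    {f : Submodule F (Fin 4 → F) → Submodule F (Fin 4 → F)}
    (hf : f ∈ GqStabilizer F infPoint) : ∃ (a : Fˣ) (b : F), f = act F (affineGL a b) := by
  obtain ⟨⟨⟨M, rfl⟩, hC⟩, hfix⟩ := hf
  have hrow : ∀ j ≠ 0, (M : Matrix (Fin 4) (Fin 4) F) 0 j = 0 := by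
    rw [infPoint, act_span_singleton] at hfix
    obtain ⟨z, hz⟩ := Submodule.span_singleton_eq_span_singleton.mp hfix
    rw [infVec_eq_single, Matrix.single_one_vecMul] at hz
    intro j hj
    simpa [Units.smul_def, hj] using congrFun hz j
  have hcubic : ∀ t, ∃ s, act F M (cubicPoint t) = cubicPoint s := fun t => by
    have hmem : act F M (cubicPoint t) ∈ twistedCubic F :=
      hC ▸ mem_image_of_mem _ (cubicPoint_mem t)
    rcases mem_twistedCubic.mp hmem with ⟨s, hs⟩ | hinf
    · exact ⟨s, hs⟩
    · exact absurd (act_injective M (hinf.trans hfix.symm)) (cubicPoint_ne_infPoint t)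
  choose σ hσ using hcubic
  have hvec : ∀ t, ∃ u : Fˣ, cubicVec t ᵥ* (M : Matrix (Fin 4) (Fin 4) F) = u • cubicVec (σ t) :=
    fun t => by
      obtain ⟨z, hz⟩ := Submodule.span_singleton_eq_span_singleton.mp
        ((act_span_singleton M _).symm.trans (hσ t))
      exact ⟨z⁻¹, by rw [← hz, inv_smul_smul]⟩
  choose μ hμ using hvec
  have hσ01 : σ 0 ≠ σ 1 := fun h =>
    zero_ne_one (cubicPoint_injective (act_injective M (by rw [hσ, hσ, h])))
  obtain ⟨c, a, b, hM⟩ := exists_eq_smul_affineMatrix hF hrow hσ01 hμ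
  exact ⟨a, b, act_eq_act_of_val_eq_smul c.ne_zero hM⟩

lemma ncard_GqStabilizer_infPoint [Fintype F] (hF : 5 ≤ Fintype.card F) :
    (GqStabilizer F infPoint).ncard = Fintype.card F * (Fintype.card F - 1) := by
  classical
  have hrange : GqStabilizer F infPoint = range fun p : Fˣ × F => act F (affineGL p.1 p.2) := by
    refine Subset.antisymm (fun f hf => ?_) ?_
    · obtain ⟨a, b, rfl⟩ := exists_affineGL_of_mem_GqStabilizer_infPoint hF hf
      exact ⟨(a, b), rfl⟩
    · rintro _ ⟨⟨a, b⟩, rfl⟩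
      exact ⟨affineGL_mem_Gq a b, act_affineGL_infPoint a b⟩
  rw [hrange, ← image_univ, ncard_image_of_injective _ act_affineGL_injective, ncard_univ,
    Nat.card_prod, Nat.card_eq_fintype_card, Nat.card_eq_fintype_card, Fintype.card_units,
    mul_comm]

lemma act_affineGL_act_reverseGL_infPoint (τ : F) :
    act F (affineGL 1 τ) (act F reverseGL infPoint) = cubicPoint τ := by
  rw [act_reverseGL_infPoint, act_affineGL_cubicPoint, mul_zero, zero_add]

end TwistedCubic

open TwistedCubic

/-- The stabilizer in `G_q` of a point of the twisted cubic has exactly `q(q-1)`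
elements. -/
theorem stmt_10 (q : ℕ) (hq : 5 ≤ q) (F : Type) [Field F] [Fintype F]
    (hcard : Fintype.card F = q)
    (P : Submodule F (Fin 4 → F)) (hP : P ∈ twistedCubic F) :
    {f | f ∈ Gq F ∧ f P = P}.ncard = q * (q - 1) := by
  subst hcard
  change (GqStabilizer F P).ncard = _
  rcases mem_twistedCubic.mp hP with ⟨τ, rfl⟩ | rfl
  · rw [← act_affineGL_act_reverseGL_infPoint τ, ncard_GqStabilizer_act (affineGL_mem_Gq 1 τ),
      ncard_GqStabilizer_act reverseGL_mem_Gq]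
    exact ncard_GqStabilizer_infPoint hq
  · exact ncard_GqStabilizer_infPoint hq
end
end
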